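/- arXiv:2306.00384 — 7 statements merged into one kernel-verified Lean document; each statement's English description precedes it below -/
import Mathlib

section
/- Let α ≥ 1 be a real number and let F be a finite family of r-element sets with |F| > α^r. Then F contains a flower with threshold α, i.e., a subfamily S with core Y = ⋂_{S∈S} S such that the family of petals {S \ Y : S ∈ S} has no transversal of size at most α (every set of at most α vertices misses some petal). -/
/-!
Induction on `r`. Let `Y` be the intersection of all members of `F`. Either `F` itself is a flower
with core `Y`, or some set `T` of at most `α` vertices meets every petal `A \ Y`, hence every member
of `F`. In the latter case, by pigeonhole some `x ∈ T` lies in more than `α ^ (r - 1)` members of `F`;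
the induction hypothesis gives a flower in the link of `x`, and adding `x` back to its members and
its core gives a flower in `F`.
-/

open Finset

def FamIntersecting (F : Finset (Finset ℕ)) : Prop :=
  ∀ A ∈ F, ∀ B ∈ F, (A ∩ B).Nonempty

def maxDeg (F : Finset (Finset ℕ)) : ℕ :=
  (F.biUnion id).sup fun x => (F.filter fun E => x ∈ E).card

def IsFlower (α : ℝ) (S : Finset (Finset ℕ)) (Y : Finset ℕ) : Prop :=
  S.Nonempty ∧ (∀ A ∈ S, Y ⊆ A) ∧ (∀ x, (∀ A ∈ S, x ∈ A) → x ∈ Y) ∧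
    ∀ T : Finset ℕ, (T.card : ℝ) ≤ α → ∃ A ∈ S, (A \ Y) ∩ T = ∅

def IsFlowerCore (α : ℝ) (F : Finset (Finset ℕ)) (Y : Finset ℕ) : Prop :=
  Y.Nonempty ∧ ∃ S ⊆ F, IsFlower α S Y

open scoped Classical in
noncomputable def flowerBase (α : ℝ) (F : Finset (Finset ℕ)) : Finset (Finset ℕ) :=
  (F.biUnion Finset.powerset).filter fun B =>
    (IsFlowerCore α F B ∨ B ∈ F) ∧
    ∀ B', (IsFlowerCore α F B' ∨ B' ∈ F) → B' ⊆ B → B' = B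

noncomputable def tau (F : Finset (Finset ℕ)) : ℕ :=
  sInf {k | ∃ T : Finset ℕ, T.card = k ∧ ∀ A ∈ F, (A ∩ T).Nonempty}

def link (F : Finset (Finset ℕ)) (x : ℕ) : Finset (Finset ℕ) :=
  (F.filter (x ∈ ·)).image (·.erase x)

lemma mem_link {F : Finset (Finset ℕ)} {x : ℕ} {B : Finset ℕ} :
    B ∈ link F x ↔ x ∉ B ∧ insert x B ∈ F := by
  constructor
  · intro hB
    obtain ⟨A, hA, rfl⟩ := mem_image.mp hB
    obtain ⟨hAF, hxA⟩ := mem_filter.mp hA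
    exact ⟨notMem_erase x A, by rwa [insert_erase hxA]⟩
  · rintro ⟨hxB, hB⟩
    exact mem_image.mpr ⟨insert x B, mem_filter.mpr ⟨hB, mem_insert_self x B⟩, erase_insert hxB⟩

lemma card_link (F : Finset (Finset ℕ)) (x : ℕ) : #(link F x) = #(F.filter (x ∈ ·)) := by
  refine card_image_of_injOn fun A hA B hB hAB => ?_
  have hxA : x ∈ A := (mem_filter.mp hA).2
  have hxB : x ∈ B := (mem_filter.mp hB).2
  rw [← insert_erase hxA, ← insert_erase hxB]
  exact congrArg (insert x) hAB

lemma card_of_mem_link {F : Finset (Finset ℕ)} {x r : ℕ} (hr : ∀ A ∈ F, #A = r + 1)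
    {B : Finset ℕ} (hB : B ∈ link F x) : #B = r := by
  obtain ⟨hxB, hB⟩ := mem_link.mp hB
  have := hr _ hB
  rw [card_insert_of_notMem hxB] at this
  omega

lemma exists_lt_card_filter_mem_of_forall_inter_nonempty {F : Finset (Finset ℕ)} {T : Finset ℕ}
    (hT : ∀ A ∈ F, (A ∩ T).Nonempty) {b : ℝ} (hb : #T * b < #F) :
    ∃ x ∈ T, b < #(F.filter (x ∈ ·)) := by
  have hcover : F ⊆ T.biUnion fun x => F.filter (x ∈ ·) := fun A hA => by
    obtain ⟨x, hx⟩ := hT A hA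
    exact mem_biUnion.mpr ⟨x, (mem_inter.mp hx).2, mem_filter.mpr ⟨hA, (mem_inter.mp hx).1⟩⟩
  have hF : (#F : ℝ) ≤ ∑ x ∈ T, (#(F.filter (x ∈ ·)) : ℝ) := by
    exact_mod_cast (card_le_card hcover).trans card_biUnion_le
  apply exists_lt_of_sum_lt
  rw [sum_const, nsmul_eq_mul]
  exact hb.trans_le hF

lemma mem_inf'_id_iff {F : Finset (Finset ℕ)} (hF : F.Nonempty) {x : ℕ} :
    x ∈ F.inf' hF id ↔ ∀ A ∈ F, x ∈ A := by
  simp only [← singleton_subset_iff, le_inf'_iff, id]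

lemma exists_transversal_of_not_isFlower {α : ℝ} {F : Finset (Finset ℕ)} (hF : F.Nonempty)
    (h : ¬ IsFlower α F (F.inf' hF id)) :
    ∃ T : Finset ℕ, (#T : ℝ) ≤ α ∧ ∀ A ∈ F, (A ∩ T).Nonempty := by
  by_contra! hT
  refine h ⟨hF, fun A hA => inf'_le id hA, fun x hx => (mem_inf'_id_iff hF).mpr hx, fun T hTα => ?_⟩
  obtain ⟨A, hA, hAT⟩ := hT T hTα
  exact ⟨A, hA, subset_empty.mp (hAT ▸ inter_subset_inter sdiff_subset subset_rfl)⟩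

lemma IsFlower.image_insert {α : ℝ} {S : Finset (Finset ℕ)} {Y : Finset ℕ} (h : IsFlower α S Y)
    {x : ℕ} (hx : ∀ B ∈ S, x ∉ B) : IsFlower α (S.image (insert x)) (insert x Y) := by
  obtain ⟨hne, hcore, hcore', hpetals⟩ := h
  refine ⟨hne.image _, ?_, fun y hy => ?_, fun T hT => ?_⟩
  · simp only [mem_image, forall_exists_index, and_imp, forall_apply_eq_imp_iff₂]
    exact fun B hB => insert_subset_insert x (hcore B hB)
  · by_cases hyx : y = x
    · exact hyx ▸ mem_insert_self y Y
    · refine mem_insert_of_mem (hcore' y fun B hB => ?_)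
      exact (mem_insert.mp (hy _ (mem_image_of_mem _ hB))).resolve_left hyx
  · obtain ⟨B, hB, hBT⟩ := hpetals T hT
    refine ⟨insert x B, mem_image_of_mem _ hB, ?_⟩
    rwa [insert_sdiff_insert, sdiff_insert_of_notMem (hx B hB)]

theorem exists_isFlower_of_pow_lt_card {α : ℝ} (hα : 0 ≤ α) {r : ℕ} {F : Finset (Finset ℕ)}
    (hr : ∀ A ∈ F, #A = r) (hcard : α ^ r < #F) : ∃ S ⊆ F, ∃ Y : Finset ℕ, IsFlower α S Y := by
  induction r generalizing F with
  | zero =>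
    have hF : #F ≤ 1 := card_le_one.mpr fun A hA B hB => by
      rw [card_eq_zero.mp (hr A hA), card_eq_zero.mp (hr B hB)]
    rw [pow_zero] at hcard
    exact absurd hcard (not_lt.mpr (by exact_mod_cast hF))
  | succ r ih =>
    have hF : F.Nonempty := card_pos.mp (by exact_mod_cast (pow_nonneg hα _).trans_lt hcard)
    by_cases hflower : IsFlower α F (F.inf' hF id)
    · exact ⟨F, subset_rfl, _, hflower⟩
    obtain ⟨T, hTα, hT⟩ := exists_transversal_of_not_isFlower hF hflower
    have hTF : #T * α ^ r < #F :=
      (mul_le_mul_of_nonneg_right hTα (pow_nonneg hα r)).trans_lt (pow_succ' α r ▸ hcard)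
    obtain ⟨x, -, hx⟩ := exists_lt_card_filter_mem_of_forall_inter_nonempty hT hTF
    obtain ⟨S, hSF, Y, hSY⟩ := ih (fun B hB => card_of_mem_link hr hB) (card_link F x ▸ hx)
    refine ⟨S.image (insert x), ?_, insert x Y,
      hSY.image_insert fun B hB => (mem_link.mp (hSF hB)).1⟩
    simp only [subset_iff, mem_image, forall_exists_index, and_imp, forall_apply_eq_imp_iff₂]
    exact fun B hB => (mem_link.mp (hSF hB)).2

theorem stmt2 (α : ℝ) (hα : 1 ≤ α) (r : ℕ) (F : Finset (Finset ℕ))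
    (hr : ∀ A ∈ F, A.card = r) (hcard : α ^ r < (F.card : ℝ)) :
    ∃ S ⊆ F, ∃ Y : Finset ℕ, IsFlower α S Y :=
  exists_isFlower_of_pow_lt_card (zero_le_one.trans hα) hr hcard
end

section
/- Let F ⊆ 2^[n] be an intersecting family of r-sets and let BF be its flower base with threshold α ≥ r. Then BF is intersecting, and moreover every member B of BF is a transversal of F (every edge of F intersects B). -/
/-! If `Y` is the core of a flower with threshold `α` and `T` has at most `α` elements and meets
every set `A` of the flower, then `T` meets `Y`: some petal `A \ Y` misses `T`, yet `A` meets `T`.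
Members of `F`, and hence members of the flower base (each lies inside a member of `F`), have at most
`r ≤ α` elements. Taking `T ∈ F` shows that every member of the flower base is a transversal of `F`;
taking `T` in the flower base then shows that the flower base is intersecting. -/

open Finset

theorem IsFlower.core_inter_nonempty {α : ℝ} {S : Finset (Finset ℕ)} {Y T : Finset ℕ}
    (hS : IsFlower α S Y) (hT : (T.card : ℝ) ≤ α) (hST : ∀ A ∈ S, (A ∩ T).Nonempty) :
    (Y ∩ T).Nonempty := by
  obtain ⟨A, hA, hAT⟩ := hS.2.2.2 T hT
  obtain ⟨x, hx⟩ := hST A hA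
  obtain ⟨hxA, hxT⟩ := mem_inter.1 hx
  refine ⟨x, mem_inter.2 ⟨?_, hxT⟩⟩
  by_contra hxY
  have hx' : x ∈ (A \ Y) ∩ T := mem_inter.2 ⟨mem_sdiff.2 ⟨hxA, hxY⟩, hxT⟩
  simp [hAT] at hx'

theorem inter_nonempty_of_isFlowerCore_or_mem {α : ℝ} {F : Finset (Finset ℕ)} {Y T : Finset ℕ}
    (hT : (T.card : ℝ) ≤ α) (hTF : ∀ A ∈ F, (A ∩ T).Nonempty)
    (hY : IsFlowerCore α F Y ∨ Y ∈ F) : (Y ∩ T).Nonempty := by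
  rcases hY with ⟨-, S, hSF, hS⟩ | hYF
  · exact hS.core_inter_nonempty hT fun A hA => hTF A (hSF hA)
  · exact hTF Y hYF

theorem isFlowerCore_or_mem_of_mem_flowerBase {α : ℝ} {F : Finset (Finset ℕ)} {B : Finset ℕ}
    (hB : B ∈ flowerBase α F) : IsFlowerCore α F B ∨ B ∈ F := by
  classical
  simp only [flowerBase, mem_filter] at hB
  exact hB.2.1

theorem exists_superset_of_mem_flowerBase {α : ℝ} {F : Finset (Finset ℕ)} {B : Finset ℕ}
    (hB : B ∈ flowerBase α F) : ∃ E ∈ F, B ⊆ E := by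
  classical
  simp only [flowerBase, mem_filter, mem_biUnion, mem_powerset] at hB
  exact hB.1

theorem stmt4 (n r : ℕ) (α : ℝ) (hα : (r : ℝ) ≤ α) (F : Finset (Finset ℕ))
    (hF : ∀ E ∈ F, E ⊆ Finset.range n ∧ E.card = r) (hint : FamIntersecting F) :
    FamIntersecting (flowerBase α F) ∧
    ∀ B ∈ flowerBase α F, ∀ E ∈ F, (E ∩ B).Nonempty := by
  have hcard : ∀ E ∈ F, (E.card : ℝ) ≤ α := fun E hE => by rw [(hF E hE).2]; exact hα
  have htrans : ∀ B ∈ flowerBase α F, ∀ E ∈ F, (E ∩ B).Nonempty := fun B hB E hE => by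
    rw [inter_comm]
    exact inter_nonempty_of_isFlowerCore_or_mem (hcard E hE) (fun A hA => hint A hA E hE)
      (isFlowerCore_or_mem_of_mem_flowerBase hB)
  refine ⟨fun B₁ hB₁ B₂ hB₂ => ?_, htrans⟩
  obtain ⟨E, hE, hB₁E⟩ := exists_superset_of_mem_flowerBase hB₁
  have hB₁card : (B₁.card : ℝ) ≤ α := (Nat.cast_le.2 (card_le_card hB₁E)).trans (hcard E hE)
  rw [inter_comm]
  exact inter_nonempty_of_isFlowerCore_or_mem hB₁card (fun A hA => htrans B₁ hB₁ A hA)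
    (isFlowerCore_or_mem_of_mem_flowerBase hB₂)
end

section
/- Let F ⊆ 2^[n] be a family of r-sets and BF its flower base with threshold α ≥ r ≥ τ(F). Then the minimum transversal size of the flower base equals that of the family: τ(BF) = τ(F). -/
open Finset

/-!
Every member of `F` contains a member of the flower base, so every transversal of the flower base
is a transversal of `F`. Conversely, a transversal `T` of `F` with `|T| ≤ α` meets every flower
core `Y`: some petal of the flower avoids `T`, so the point where `T` meets that member of `F` lies
in `Y`. Since `τ(F) ≤ r ≤ α`, a minimum transversal of `F` is therefore one of the flower base.
-/

def IsTransversal (F : Finset (Finset ℕ)) (T : Finset ℕ) : Prop :=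
  ∀ A ∈ F, (A ∩ T).Nonempty

lemma IsFlowerCore.exists_mem_superset {α : ℝ} {F : Finset (Finset ℕ)} {Y : Finset ℕ}
    (hY : IsFlowerCore α F Y) : ∃ A ∈ F, Y ⊆ A := by
  obtain ⟨-, S, hSF, ⟨A, hA⟩, hYS, -⟩ := hY
  exact ⟨A, hSF hA, hYS A hA⟩

lemma mem_flowerBase_iff {α : ℝ} {F : Finset (Finset ℕ)} {B : Finset ℕ} :
    B ∈ flowerBase α F ↔ Minimal (fun Y => IsFlowerCore α F Y ∨ Y ∈ F) B := by
  classical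
  rw [flowerBase, mem_filter, Minimal]
  refine ⟨fun ⟨_, hB, hmin⟩ => ⟨hB, fun B' hB' hsub => (hmin B' hB' hsub).ge⟩,
    fun ⟨hB, hmin⟩ => ⟨?_, hB, fun B' hB' hsub => hsub.antisymm (hmin hB' hsub)⟩⟩
  obtain ⟨A, hA, hBA⟩ : ∃ A ∈ F, B ⊆ A := hB.elim IsFlowerCore.exists_mem_superset
    fun h => ⟨B, h, subset_rfl⟩
  exact mem_biUnion.2 ⟨A, hA, mem_powerset.2 hBA⟩

lemma exists_mem_flowerBase_subset (α : ℝ) {F : Finset (Finset ℕ)} {A : Finset ℕ}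
    (hA : A ∈ F) : ∃ B ∈ flowerBase α F, B ⊆ A := by
  obtain ⟨B, hBA, hB⟩ :=
    exists_minimal_le_of_wellFoundedLT (fun Y => IsFlowerCore α F Y ∨ Y ∈ F) A (Or.inr hA)
  exact ⟨B, mem_flowerBase_iff.2 hB, hBA⟩

lemma IsTransversal.of_flowerBase {α : ℝ} {F : Finset (Finset ℕ)} {T : Finset ℕ}
    (hT : IsTransversal (flowerBase α F) T) : IsTransversal F T := by
  intro A hA
  obtain ⟨B, hB, hBA⟩ := exists_mem_flowerBase_subset α hA
  exact (hT B hB).mono (inter_subset_inter_right hBA)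

lemma IsFlowerCore.inter_nonempty_of_isTransversal {α : ℝ} {F : Finset (Finset ℕ)}
    {Y T : Finset ℕ} (hY : IsFlowerCore α F Y) (hT : IsTransversal F T) (hTα : (T.card : ℝ) ≤ α) :
    (Y ∩ T).Nonempty := by
  obtain ⟨-, S, hSF, -, -, -, hpetals⟩ := hY
  obtain ⟨A, hAS, hAT⟩ := hpetals T hTα
  obtain ⟨x, hx⟩ := hT A (hSF hAS)
  obtain ⟨hxA, hxT⟩ := mem_inter.1 hx
  refine ⟨x, mem_inter.2 ⟨by_contra fun hxY => ?_, hxT⟩⟩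
  simpa [hAT] using mem_inter.2 ⟨mem_sdiff.2 ⟨hxA, hxY⟩, hxT⟩

lemma IsTransversal.flowerBase {α : ℝ} {F : Finset (Finset ℕ)} {T : Finset ℕ}
    (hT : IsTransversal F T) (hTα : (T.card : ℝ) ≤ α) : IsTransversal (flowerBase α F) T := by
  intro B hB
  exact (mem_flowerBase_iff.1 hB).prop.elim (·.inter_nonempty_of_isTransversal hT hTα) (hT B)

lemma Nat.sInf_eq_of_subset_of_sInf_mem {A B : Set ℕ} (hBA : B ⊆ A)
    (hA : A.Nonempty → sInf A ∈ B) : sInf B = sInf A := by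
  rcases A.eq_empty_or_nonempty with rfl | hne
  · rw [Set.subset_empty_iff.1 hBA]
  · exact IsLeast.csInf_eq ⟨hA hne, fun b hb => Nat.sInf_le (hBA hb)⟩

theorem stmt5_general (r : ℕ) (α : ℝ) (F : Finset (Finset ℕ))
    (hα : (r : ℝ) ≤ α) (hτ : tau F ≤ r) :
    tau (flowerBase α F) = tau F := by
  refine Nat.sInf_eq_of_subset_of_sInf_mem ?_ fun hne => ?_
  · rintro k ⟨T, hTk, hT⟩
    exact ⟨T, hTk, IsTransversal.of_flowerBase hT⟩
  · obtain ⟨T, hTcard, hT⟩ := Nat.sInf_mem hne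
    have hTα : (T.card : ℝ) ≤ α := by
      rw [hTcard]
      exact (Nat.cast_le.2 hτ).trans hα
    exact ⟨T, hTcard, IsTransversal.flowerBase hT hTα⟩

theorem stmt5 (n r : ℕ) (α : ℝ) (F : Finset (Finset ℕ))
    (hF : ∀ E ∈ F, E ⊆ Finset.range n ∧ E.card = r)
    (hα : (r : ℝ) ≤ α) (hτ : tau F ≤ r) :
    tau (flowerBase α F) = tau F :=
  stmt5_general r α F hα hτ
end

section
/- If B is an intersecting 3-uniform family whose minimum transversal size is 3, then |B| ≤ 10 and B spans at most 7 vertices. -/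
/-!
Fix a minimum cover `{x, y, z}` of `B`. Besides `{x, y, z}` itself, every edge either meets the
cover in a single point (it is *private* to that point) or in exactly two points. Since
`τ(B) = 3`, any two vertices are avoided by some edge. An edge avoiding `z` and a vertex `u`
contains `x` or `y`, so it leaves only two candidates for the third vertex of a private edge of
`z` through `u`. Playing this against private edges of `x` and `y` shows that the private edges
of `z` together with the edges through `x` and `y` but not `z` number at most three; the three
classes of this kind and `{x, y, z}` give `|B| ≤ 10`.

For the vertices, choose a private edge for each of `x`, `y`, `z`. Three pairwise intersecting
triples span at most seven vertices, and if some edge has a vertex `t` outside their span,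
exchanging one of the three for an edge through `t` enlarges the span. Hence a choice of maximal
span covers every edge.
-/

open Finset

namespace Finset

lemma eq_triple_of_mem {E : Finset ℕ} (hE : E.card = 3) {a b c : ℕ} (ha : a ∈ E) (hb : b ∈ E)
    (hc : c ∈ E) (hab : a ≠ b) (hac : a ≠ c) (hbc : b ≠ c) : E = {a, b, c} := by
  refine (eq_of_subset_of_card_le ?_ ?_).symm
  · intro v hv
    simp only [mem_insert, mem_singleton] at hv
    rcases hv with rfl | rfl | rfl <;> assumption
  · rw [hE, card_eq_three.2 ⟨a, b, c, hab, hac, hbc, rfl⟩]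

lemma exists_eq_triple_of_mem_of_mem {E : Finset ℕ} (hE : E.card = 3) {a b : ℕ} (ha : a ∈ E)
    (hb : b ∈ E) (hab : a ≠ b) : ∃ c, c ≠ a ∧ c ≠ b ∧ E = {a, b, c} := by
  obtain ⟨c, hc⟩ := card_eq_one.1 (show ((E.erase a).erase b).card = 1 by
    rw [card_erase_of_mem (mem_erase.2 ⟨hab.symm, hb⟩), card_erase_of_mem ha, hE])
  have hcE : c ∈ (E.erase a).erase b := hc ▸ mem_singleton_self c
  simp only [mem_erase] at hcE
  exact ⟨c, hcE.2.1, hcE.1, eq_triple_of_mem hE ha hb hcE.2.2 hab hcE.2.1.symm hcE.1.symm⟩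

lemma exists_eq_triple_of_mem {E : Finset ℕ} (hE : E.card = 3) {a : ℕ} (ha : a ∈ E) :
    ∃ b c, b ≠ a ∧ c ≠ a ∧ b ≠ c ∧ E = {a, b, c} := by
  obtain ⟨b, c, hbc, hpair⟩ := card_eq_two.1 (show (E.erase a).card = 2 by
    rw [card_erase_of_mem ha, hE])
  have hb : b ∈ E.erase a := by simp [hpair]
  have hc : c ∈ E.erase a := by simp [hpair]
  exact ⟨b, c, ne_of_mem_erase hb, ne_of_mem_erase hc, hbc, by rw [← insert_erase ha, hpair]⟩

lemma card_union_le_seven {P Q R : Finset ℕ} (hP : P.card = 3) (hQ : Q.card = 3)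
    (hR : R.card = 3) (hPQ : (P ∩ Q).Nonempty) (hPR : (P ∩ R).Nonempty) :
    (P ∪ Q ∪ R).card ≤ 7 := by
  have h₁ := card_union_add_card_inter P Q
  have h₂ := card_union_add_card_inter (P ∪ Q) R
  have h₃ : 1 ≤ ((P ∪ Q) ∩ R).card :=
    card_pos.2 (hPR.mono (inter_subset_inter_right subset_union_left))
  have h₄ : 1 ≤ (P ∩ Q).card := card_pos.2 hPQ
  omega

end Finset

open Finset

lemma FamIntersecting.mem_triple {B : Finset (Finset ℕ)} (hB : FamIntersecting B)
    {E : Finset ℕ} {a b c : ℕ} (hE : E ∈ B) (habc : {a, b, c} ∈ B) :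
    a ∈ E ∨ b ∈ E ∨ c ∈ E := by
  obtain ⟨v, hv⟩ := hB E hE _ habc
  simp only [mem_inter, mem_insert, mem_singleton] at hv
  rcases hv with ⟨hv, rfl | rfl | rfl⟩ <;> simp [hv]

structure IsIntersectingTriples (B : Finset (Finset ℕ)) : Prop where
  card_eq : ∀ E ∈ B, E.card = 3
  intersecting : FamIntersecting B

-- `exists_avoid` says `2 < τ(B)`; every edge of an intersecting family is a cover, so `τ(B) = 3`.
structure IsTauThree (B : Finset (Finset ℕ)) : Prop extends IsIntersectingTriples B where
  exists_avoid : ∀ u v : ℕ, ∃ E ∈ B, u ∉ E ∧ v ∉ E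

structure IsTriCover (B : Finset (Finset ℕ)) (x y z : ℕ) : Prop where
  ne_xy : x ≠ y
  ne_xz : x ≠ z
  ne_yz : y ≠ z
  cover : ∀ E ∈ B, x ∈ E ∨ y ∈ E ∨ z ∈ E

def IsPrivate (x y z : ℕ) (E : Finset ℕ) : Prop := x ∈ E ∧ y ∉ E ∧ z ∉ E

structure IsPrivateTriple (B : Finset (Finset ℕ)) (x y z : ℕ) (P Q R : Finset ℕ) : Prop where
  mem₁ : P ∈ B
  mem₂ : Q ∈ B
  mem₃ : R ∈ B
  isPrivate₁ : IsPrivate x y z P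
  isPrivate₂ : IsPrivate y z x Q
  isPrivate₃ : IsPrivate z x y R

lemma exists_avoid_of_two_lt_tau {B : Finset (Finset ℕ)} (hτ : 2 < tau B) (u v : ℕ) :
    ∃ E ∈ B, u ∉ E ∧ v ∉ E := by
  by_contra! h
  have hcover : ∀ A ∈ B, (A ∩ {u, v}).Nonempty := fun A hA => by
    by_cases hu : u ∈ A
    · exact ⟨u, by simp [hu]⟩
    · exact ⟨v, by simp [h A hA hu]⟩
  have h₁ : tau B ≤ ({u, v} : Finset ℕ).card := Nat.sInf_le ⟨{u, v}, rfl, hcover⟩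
  have h₂ : ({u, v} : Finset ℕ).card ≤ 2 := card_le_two
  omega

lemma exists_isTriCover_of_tau_eq_three {B : Finset (Finset ℕ)} (hτ : tau B = 3) :
    ∃ x y z, IsTriCover B x y z := by
  obtain ⟨T, hT, hcover⟩ := Nat.sInf_mem (Nat.nonempty_of_pos_sInf (hτ ▸ three_pos :
    0 < tau B))
  obtain ⟨x, y, z, hxy, hxz, hyz, rfl⟩ := card_eq_three.1 (hT.trans hτ)
  refine ⟨x, y, z, hxy, hxz, hyz, fun E hE => ?_⟩
  obtain ⟨v, hv⟩ := hcover E hE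
  simp only [mem_inter, mem_insert, mem_singleton] at hv
  rcases hv with ⟨hv, rfl | rfl | rfl⟩ <;> simp [hv]

section

variable {B : Finset (Finset ℕ)} {x y z : ℕ} {P Q R : Finset ℕ}

lemma IsTriCover.rotate (hT : IsTriCover B x y z) : IsTriCover B y z x :=
  ⟨hT.ne_yz, hT.ne_xy.symm, hT.ne_xz.symm, fun E hE => by have := hT.cover E hE; tauto⟩

lemma IsTriCover.exists_mem_of_not_mem (hT : IsTriCover B x y z) {N : Finset ℕ} (hN : N ∈ B)
    (hzN : z ∉ N) : ∃ θ ∈ N, θ = x ∨ θ = y := by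
  rcases hT.cover N hN with h | h | h
  exacts [⟨x, h, Or.inl rfl⟩, ⟨y, h, Or.inr rfl⟩, absurd h hzN]

lemma IsPrivate.swap {E : Finset ℕ} (h : IsPrivate x y z E) : IsPrivate x z y E :=
  ⟨h.1, h.2.2, h.2.1⟩

lemma IsPrivateTriple.rotate (h : IsPrivateTriple B x y z P Q R) :
    IsPrivateTriple B y z x Q R P :=
  ⟨h.mem₂, h.mem₃, h.mem₁, h.isPrivate₂, h.isPrivate₃, h.isPrivate₁⟩

lemma IsPrivateTriple.swap (h : IsPrivateTriple B x y z P Q R) :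
    IsPrivateTriple B x z y P R Q :=
  ⟨h.mem₁, h.mem₃, h.mem₂, h.isPrivate₁.swap, h.isPrivate₃.swap, h.isPrivate₂.swap⟩

lemma IsIntersectingTriples.eq_of_private_of_avoid (hB : IsIntersectingTriples B)
    {N E : Finset ℕ} {θ a b u : ℕ} (huz : u ≠ z) (hN : N ∈ B) (hzN : z ∉ N) (huN : u ∉ N)
    (hθ : θ = x ∨ θ = y) (hNeq : N = {θ, a, b}) (hE : E ∈ B) (hEz : IsPrivate z x y E)
    (huE : u ∈ E) : E = {z, u, a} ∨ E = {z, u, b} := by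
  have hθE : θ ∉ E := by rcases hθ with rfl | rfl; exacts [hEz.2.1, hEz.2.2]
  have ha : a ∈ N := by simp [hNeq]
  have hb : b ∈ N := by simp [hNeq]
  rcases hB.intersecting.mem_triple hE (hNeq ▸ hN) with h | h | h
  · exact absurd h hθE
  · exact Or.inl (eq_triple_of_mem (hB.card_eq E hE) hEz.1 huE h huz.symm
      (ne_of_mem_of_not_mem ha hzN).symm (ne_of_mem_of_not_mem ha huN).symm)
  · exact Or.inr (eq_triple_of_mem (hB.card_eq E hE) hEz.1 huE h huz.symm
      (ne_of_mem_of_not_mem hb hzN).symm (ne_of_mem_of_not_mem hb huN).symm)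

lemma IsTauThree.exists_private_mem_eq (hB : IsTauThree B) (hT : IsTriCover B x y z)
    {u : ℕ} (huz : u ≠ z) :
    ∃ a b, ∀ E ∈ B, IsPrivate z x y E → u ∈ E → E = {z, u, a} ∨ E = {z, u, b} := by
  obtain ⟨N, hN, hzN, huN⟩ := hB.exists_avoid z u
  obtain ⟨θ, hθN, hθ⟩ := hT.exists_mem_of_not_mem hN hzN
  obtain ⟨a, b, -, -, -, hNeq⟩ := exists_eq_triple_of_mem (hB.card_eq N hN) hθN
  exact ⟨a, b, fun E hE hEz huE =>
    hB.eq_of_private_of_avoid huz hN hzN huN hθ hNeq hE hEz huE⟩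

lemma IsTauThree.exists_private_mem_eq_of_pair (hB : IsTauThree B) (hT : IsTriCover B x y z)
    (hxyz : ∀ E ∈ B, x ∈ E → y ∈ E → z ∈ E) {v w : ℕ} (hG : {x, v, w} ∈ B)
    (hH : {y, v, w} ∈ B) (hvz : v ≠ z) (hwx : w ≠ x) (hwy : w ≠ y) :
    ∃ n, ∀ E ∈ B, IsPrivate z x y E → v ∈ E → E = {z, v, w} ∨ E = {z, v, n} := by
  obtain ⟨N, hN, hzN, hvN⟩ := hB.exists_avoid z v
  have hwN : w ∈ N := by
    by_contra hwN
    have hxN : x ∈ N := by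
      rcases hB.intersecting.mem_triple hN hG with h | h | h
      exacts [h, absurd h hvN, absurd h hwN]
    have hyN : y ∈ N := by
      rcases hB.intersecting.mem_triple hN hH with h | h | h
      exacts [h, absurd h hvN, absurd h hwN]
    exact hzN (hxyz N hN hxN hyN)
  obtain ⟨θ, hθN, hθ⟩ := hT.exists_mem_of_not_mem hN hzN
  have hθw : θ ≠ w := by rcases hθ with rfl | rfl; exacts [hwx.symm, hwy.symm]
  obtain ⟨n, -, -, hNeq⟩ := exists_eq_triple_of_mem_of_mem (hB.card_eq N hN) hθN hwN hθw
  exact ⟨n, fun E hE hEz hvE =>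
    hB.eq_of_private_of_avoid hvz hN hzN hvN hθ hNeq hE hEz hvE⟩

lemma IsTauThree.exists_private_eq_of_forall_mem (hB : IsTauThree B) (hT : IsTriCover B x y z)
    (hxyz : ∀ E ∈ B, x ∈ E → y ∈ E → z ∈ E) :
    ∃ C₁ C₂ C₃, ∀ E ∈ B, IsPrivate z x y E → E = C₁ ∨ E = C₂ ∨ E = C₃ := by
  obtain ⟨G, hG, hyG, hzG⟩ := hB.exists_avoid y z
  obtain ⟨H, hH, hxH, hzH⟩ := hB.exists_avoid x z
  have hxG : x ∈ G := by have := hT.cover G hG; tauto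
  have hyH : y ∈ H := by have := hT.cover H hH; tauto
  obtain ⟨v, hv⟩ := hB.intersecting G hG H hH
  obtain ⟨hvG, hvH⟩ := mem_inter.1 hv
  have hvx : v ≠ x := ne_of_mem_of_not_mem hvH hxH
  have hvy : v ≠ y := ne_of_mem_of_not_mem hvG hyG
  have hvz : v ≠ z := ne_of_mem_of_not_mem hvG hzG
  obtain ⟨w, hwx, -, hGeq⟩ := exists_eq_triple_of_mem_of_mem (hB.card_eq G hG) hxG hvG hvx.symm
  obtain ⟨w', -, -, hHeq⟩ := exists_eq_triple_of_mem_of_mem (hB.card_eq H hH) hyH hvH hvy.symm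
  have hwG : w ∈ G := by simp [hGeq]
  have hw'H : w' ∈ H := by simp [hHeq]
  have hwy : w ≠ y := ne_of_mem_of_not_mem hwG hyG
  have hwz : w ≠ z := ne_of_mem_of_not_mem hwG hzG
  have hw'z : w' ≠ z := ne_of_mem_of_not_mem hw'H hzH
  rw [hGeq] at hG
  rw [hHeq] at hH
  have hmem : ∀ E ∈ B, IsPrivate z x y E → v ∉ E → w ∈ E ∧ w' ∈ E := fun E hE hEz hvE => by
    have := hB.intersecting.mem_triple hE hG
    have := hB.intersecting.mem_triple hE hH
    exact ⟨by have := hEz.2.1; tauto, by have := hEz.2.2; tauto⟩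
  by_cases hww' : w = w'
  · subst hww'
    obtain ⟨n, hn⟩ := hB.exists_private_mem_eq_of_pair hT hxyz hG hH hvz hwx hwy
    obtain ⟨n', hn'⟩ := hB.exists_private_mem_eq_of_pair hT hxyz (v := w) (w := v)
      (by rwa [pair_comm]) (by rwa [pair_comm]) hwz hvx hvy
    refine ⟨{z, v, w}, {z, v, n}, {z, w, n'}, fun E hE hEz => ?_⟩
    by_cases hvE : v ∈ E
    · rcases hn E hE hEz hvE with rfl | rfl <;> simp
    · rcases hn' E hE hEz (hmem E hE hEz hvE).1 with rfl | rfl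
      · simp at hvE
      · simp
  · obtain ⟨a, b, hab⟩ := hB.exists_private_mem_eq hT hvz
    refine ⟨{z, v, a}, {z, v, b}, {z, w, w'}, fun E hE hEz => ?_⟩
    by_cases hvE : v ∈ E
    · rcases hab E hE hEz hvE with rfl | rfl <;> simp
    · obtain ⟨hwE, hw'E⟩ := hmem E hE hEz hvE
      exact Or.inr (Or.inr (eq_triple_of_mem (hB.card_eq E hE) hEz.1 hwE hw'E hwz.symm
        hw'z.symm hww'))

lemma IsTauThree.exists_private_or_pair_eq_of_mem (hB : IsTauThree B) (hT : IsTriCover B x y z)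
    {p q : ℕ} (hpz : p ≠ z) (hp : {x, y, p} ∈ B) (hq : {x, y, q} ∉ B)
    (hpair : ∀ E ∈ B, x ∈ E → y ∈ E → z ∉ E → E = {x, y, p} ∨ E = {x, y, q}) :
    ∃ C₁ C₂ C₃, ∀ E ∈ B, IsPrivate z x y E ∨ (x ∈ E ∧ y ∈ E ∧ z ∉ E) →
      E = C₁ ∨ E = C₂ ∨ E = C₃ := by
  obtain ⟨a, b, hab⟩ := hB.exists_private_mem_eq hT hpz
  refine ⟨{z, p, a}, {z, p, b}, {x, y, p}, fun E hE hE' => ?_⟩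
  rcases hE' with hEz | ⟨hxE, hyE, hzE⟩
  · have hpE : p ∈ E := by
      have := hB.intersecting.mem_triple hE hp
      have := hEz.2
      tauto
    rcases hab E hE hEz hpE with rfl | rfl <;> simp
  · rcases hpair E hE hxE hyE hzE with rfl | rfl
    · simp
    · exact absurd hE hq

lemma IsTauThree.exists_private_or_pair_eq (hB : IsTauThree B) (hT : IsTriCover B x y z) :
    ∃ C₁ C₂ C₃, ∀ E ∈ B, IsPrivate z x y E ∨ (x ∈ E ∧ y ∈ E ∧ z ∉ E) →
      E = C₁ ∨ E = C₂ ∨ E = C₃ := by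
  obtain ⟨W, hW, hxW, hyW⟩ := hB.exists_avoid x y
  have hzW : z ∈ W := by have := hT.cover W hW; tauto
  obtain ⟨p, q, hpz, hqz, hpq, hWeq⟩ := exists_eq_triple_of_mem (hB.card_eq W hW) hzW
  have hpW : p ∈ W := by simp [hWeq]
  have hqW : q ∈ W := by simp [hWeq]
  have hpair : ∀ E ∈ B, x ∈ E → y ∈ E → z ∉ E → E = {x, y, p} ∨ E = {x, y, q} := by
    intro E hE hxE hyE hzE
    rcases hB.intersecting.mem_triple hE (hWeq ▸ hW) with h | h | h
    · exact absurd h hzE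
    · exact Or.inl (eq_triple_of_mem (hB.card_eq E hE) hxE hyE h hT.ne_xy
        (ne_of_mem_of_not_mem hpW hxW).symm (ne_of_mem_of_not_mem hpW hyW).symm)
    · exact Or.inr (eq_triple_of_mem (hB.card_eq E hE) hxE hyE h hT.ne_xy
        (ne_of_mem_of_not_mem hqW hxW).symm (ne_of_mem_of_not_mem hqW hyW).symm)
  by_cases hp : {x, y, p} ∈ B <;> by_cases hq : {x, y, q} ∈ B
  · refine ⟨W, {x, y, p}, {x, y, q}, fun E hE hE' => ?_⟩
    rcases hE' with hEz | ⟨hxE, hyE, hzE⟩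
    · have := hB.intersecting.mem_triple hE hp
      have := hB.intersecting.mem_triple hE hq
      have := hEz.2
      exact Or.inl (hWeq ▸ eq_triple_of_mem (hB.card_eq E hE) hEz.1 (by tauto) (by tauto)
        hpz.symm hqz.symm hpq)
    · rcases hpair E hE hxE hyE hzE with rfl | rfl <;> simp
  · exact hB.exists_private_or_pair_eq_of_mem hT hpz hp hq hpair
  · exact hB.exists_private_or_pair_eq_of_mem hT hqz hq hp
      fun E hE hxE hyE hzE => (hpair E hE hxE hyE hzE).symm
  · have hxyz : ∀ E ∈ B, x ∈ E → y ∈ E → z ∈ E := fun E hE hxE hyE => by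
      by_contra hzE
      rcases hpair E hE hxE hyE hzE with rfl | rfl
      exacts [hp hE, hq hE]
    obtain ⟨C₁, C₂, C₃, hC⟩ := hB.exists_private_eq_of_forall_mem hT hxyz
    refine ⟨C₁, C₂, C₃, fun E hE hE' => ?_⟩
    rcases hE' with hEz | ⟨hxE, hyE, hzE⟩
    · exact hC E hE hEz
    · exact absurd (hxyz E hE hxE hyE) hzE

lemma IsTauThree.card_le_ten (hB : IsTauThree B) (hT : IsTriCover B x y z) : B.card ≤ 10 := by
  obtain ⟨C₁, C₂, C₃, hC⟩ := hB.exists_private_or_pair_eq hT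
  obtain ⟨D₁, D₂, D₃, hD⟩ := hB.exists_private_or_pair_eq hT.rotate
  obtain ⟨F₁, F₂, F₃, hF⟩ := hB.exists_private_or_pair_eq hT.rotate.rotate
  have hsub : B ⊆ [{x, y, z}, C₁, C₂, C₃, D₁, D₂, D₃, F₁, F₂, F₃].toFinset := by
    intro E hE
    have hcover := hT.cover E hE
    by_cases hx : x ∈ E <;> by_cases hy : y ∈ E <;> by_cases hz : z ∈ E
    · simp [eq_triple_of_mem (hB.card_eq E hE) hx hy hz hT.ne_xy hT.ne_xz hT.ne_yz]
    · rcases hC E hE (Or.inr ⟨hx, hy, hz⟩) with rfl | rfl | rfl <;> simp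
    · rcases hF E hE (Or.inr ⟨hz, hx, hy⟩) with rfl | rfl | rfl <;> simp
    · rcases hD E hE (Or.inl ⟨hx, hy, hz⟩) with rfl | rfl | rfl <;> simp
    · rcases hD E hE (Or.inr ⟨hy, hz, hx⟩) with rfl | rfl | rfl <;> simp
    · rcases hF E hE (Or.inl ⟨hy, hz, hx⟩) with rfl | rfl | rfl <;> simp
    · rcases hC E hE (Or.inl ⟨hz, hx, hy⟩) with rfl | rfl | rfl <;> simp
    · simp [hx, hy, hz] at hcover
  exact (card_le_card hsub).trans (List.toFinset_card_le _)

lemma IsIntersectingTriples.card_union_le_seven (hB : IsIntersectingTriples B)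
    (h : IsPrivateTriple B x y z P Q R) : (P ∪ Q ∪ R).card ≤ 7 :=
  Finset.card_union_le_seven (hB.card_eq P h.mem₁) (hB.card_eq Q h.mem₂) (hB.card_eq R h.mem₃)
    (hB.intersecting P h.mem₁ Q h.mem₂) (hB.intersecting P h.mem₁ R h.mem₃)

lemma IsTauThree.exists_privateTriple (hB : IsTauThree B) (hT : IsTriCover B x y z) :
    ∃ P Q R, IsPrivateTriple B x y z P Q R := by
  obtain ⟨P, hP, hyP, hzP⟩ := hB.exists_avoid y z
  obtain ⟨Q, hQ, hzQ, hxQ⟩ := hB.exists_avoid z x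
  obtain ⟨R, hR, hxR, hyR⟩ := hB.exists_avoid x y
  have := hT.cover P hP
  have := hT.cover Q hQ
  have := hT.cover R hR
  exact ⟨P, Q, R, hP, hQ, hR, ⟨by tauto, hyP, hzP⟩, ⟨by tauto, hzQ, hxQ⟩, ⟨by tauto, hxR, hyR⟩⟩

lemma IsIntersectingTriples.mem_of_private_of_mem_of_mem (hB : IsIntersectingTriples B)
    {R E : Finset ℕ} {t : ℕ} (hR : R ∈ B) (hRz : IsPrivate z x y R) (hE : E ∈ B) (hxE : x ∈ E)
    (hyE : y ∈ E) (htE : t ∈ E) (htx : t ≠ x) (hty : t ≠ y) (hxy : x ≠ y) : t ∈ R := by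
  have hEeq := eq_triple_of_mem (hB.card_eq E hE) hxE hyE htE hxy htx.symm hty.symm
  rcases hB.intersecting.mem_triple hR (hEeq ▸ hE) with h | h | h
  exacts [absurd h hRz.2.1, absurd h hRz.2.2, h]

lemma IsPrivateTriple.exists_superset_of_mem_avoid
    (h : IsPrivateTriple B x y z P Q R) (hB : IsIntersectingTriples B) {E K : Finset ℕ}
    {s t : ℕ} (hE : E ∈ B) (hEx : IsPrivate x y z E) (hEeq : E = {x, s, t}) (hsQ : s ∈ Q)
    (hsR : s ∈ R) (htU : t ∉ P ∪ Q ∪ R) (hK : K ∈ B) (hxK : x ∉ K) (hsK : s ∉ K)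
    (htK : t ∈ K) (hyK : y ∈ K) :
    ∃ P' Q' R', IsPrivateTriple B x y z P' Q' R' ∧ insert t (P ∪ Q ∪ R) ⊆ P' ∪ Q' ∪ R' := by
  obtain ⟨hP, hQ, hR, hPx, hQy, hRz⟩ := h
  simp only [mem_union, not_or] at htU
  obtain ⟨⟨htP, htQ⟩, htR⟩ := htU
  obtain ⟨α, -, -, hKeq⟩ :=
    exists_eq_triple_of_mem_of_mem (hB.card_eq K hK) hyK htK (ne_of_mem_of_not_mem hQy.1 htQ)
  have hαR : α ∈ R := by
    rcases hB.intersecting.mem_triple hR (hKeq ▸ hK) with h | h | h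
    exacts [absurd h hRz.2.2, absurd h htR, h]
  have hαP : α ∈ P := by
    rcases hB.intersecting.mem_triple hP (hKeq ▸ hK) with h | h | h
    exacts [absurd h hPx.2.1, absurd h htP, h]
  have hαK : α ∈ K := by simp [hKeq]
  have hzK : z ∉ K := by
    rw [hKeq]
    simp only [mem_insert, mem_singleton, not_or]
    exact ⟨ne_of_mem_of_not_mem hRz.1 hRz.2.2, ne_of_mem_of_not_mem hRz.1 htR,
      (ne_of_mem_of_not_mem hαP hPx.2.2).symm⟩
  by_cases hsP : s ∈ P
  · -- `P = {x, s, α}` is covered by `E ∪ R`, so `E` can replace `P`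
    have hPeq := eq_triple_of_mem (hB.card_eq P hP) hPx.1 hsP hαP
      (ne_of_mem_of_not_mem hsQ hQy.2.2).symm (ne_of_mem_of_not_mem hαK hxK).symm
      (ne_of_mem_of_not_mem hαK hsK).symm
    refine ⟨E, Q, R, ⟨hE, hQ, hR, hEx, hQy, hRz⟩, ?_⟩
    intro v hv
    simp only [hPeq, hEeq, mem_insert, mem_union, mem_singleton] at hv ⊢
    rcases hv with rfl | ((rfl | rfl | rfl) | hv) | hv <;> tauto
  · -- `Q` meets `P` outside `s`, so `Q ⊆ P ∪ K ∪ R` and `K` can replace `Q`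
    obtain ⟨b, hb⟩ := hB.intersecting Q hQ P hP
    obtain ⟨hbQ, hbP⟩ := mem_inter.1 hb
    have hQeq := eq_triple_of_mem (hB.card_eq Q hQ) hQy.1 hsQ hbQ
      (ne_of_mem_of_not_mem (hEeq ▸ mem_insert_of_mem (mem_insert_self s {t})) hEx.2.1).symm
      (ne_of_mem_of_not_mem hbP hPx.2.1).symm (ne_of_mem_of_not_mem hbP hsP).symm
    refine ⟨P, K, R, ⟨hP, hK, hR, hPx, ⟨hyK, hzK, hxK⟩, hRz⟩, ?_⟩
    intro v hv
    simp only [hQeq, mem_insert, mem_union, mem_singleton] at hv ⊢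
    rcases hv with rfl | (hv | (rfl | rfl | rfl)) | hv <;> tauto

lemma IsPrivateTriple.exists_superset_of_private
    (h : IsPrivateTriple B x y z P Q R) (hB : IsTauThree B) (hT : IsTriCover B x y z)
    {E : Finset ℕ} {t : ℕ} (hE : E ∈ B) (hEx : IsPrivate x y z E) (htE : t ∈ E)
    (htU : t ∉ P ∪ Q ∪ R) :
    ∃ P' Q' R', IsPrivateTriple B x y z P' Q' R' ∧ insert t (P ∪ Q ∪ R) ⊆ P' ∪ Q' ∪ R' := by
  obtain ⟨-, hQ, hR, hPx, hQy, hRz⟩ := id h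
  have htU' := htU
  simp only [mem_union, not_or] at htU'
  obtain ⟨⟨htP, htQ⟩, htR⟩ := htU'
  obtain ⟨s, hs⟩ := hB.intersecting E hE Q hQ
  obtain ⟨hsE, hsQ⟩ := mem_inter.1 hs
  have hEeq := eq_triple_of_mem (hB.card_eq E hE) hEx.1 hsE htE
    (ne_of_mem_of_not_mem hsQ hQy.2.2).symm (ne_of_mem_of_not_mem hPx.1 htP)
    (ne_of_mem_of_not_mem hsQ htQ)
  have hsR : s ∈ R := by
    rcases hB.intersecting.mem_triple hR (hEeq ▸ hE) with h | h | h
    exacts [absurd h hRz.2.1, h, absurd h htR]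
  obtain ⟨K, hK, hxK, hsK⟩ := hB.exists_avoid x s
  have htK : t ∈ K := by
    rcases hB.intersecting.mem_triple hK (hEeq ▸ hE) with h | h | h
    exacts [absurd h hxK, absurd h hsK, h]
  rcases hT.cover K hK with hxK' | hyK | hzK
  · exact absurd hxK' hxK
  · exact h.exists_superset_of_mem_avoid hB.toIsIntersectingTriples hE hEx hEeq hsQ hsR htU hK
      hxK hsK htK hyK
  · obtain ⟨P', R', Q', h', hsub⟩ := h.swap.exists_superset_of_mem_avoid
      hB.toIsIntersectingTriples hE hEx.swap hEeq hsR hsQ (by rwa [union_right_comm]) hK hxK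
      hsK htK hzK
    exact ⟨P', Q', R', h'.swap, by rwa [union_right_comm P, union_right_comm P'] at hsub⟩

lemma IsTauThree.exists_superset_of_not_mem (hB : IsTauThree B)
    (hT : IsTriCover B x y z) (h : IsPrivateTriple B x y z P Q R) {E : Finset ℕ} {t : ℕ}
    (hE : E ∈ B) (htE : t ∈ E) (htU : t ∉ P ∪ Q ∪ R) :
    ∃ P' Q' R', IsPrivateTriple B x y z P' Q' R' ∧ insert t (P ∪ Q ∪ R) ⊆ P' ∪ Q' ∪ R' := by
  have hrot : ∀ U V W : Finset ℕ, V ∪ W ∪ U = U ∪ V ∪ W := fun _ _ _ => by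
    rw [union_comm, union_assoc]
  obtain ⟨hP, hQ, hR, hPx, hQy, hRz⟩ := id h
  have htU' := htU
  simp only [mem_union, not_or] at htU'
  obtain ⟨⟨htP, htQ⟩, htR⟩ := htU'
  have htx : t ≠ x := ne_of_mem_of_not_mem hPx.1 htP |>.symm
  have hty : t ≠ y := ne_of_mem_of_not_mem hQy.1 htQ |>.symm
  have htz : t ≠ z := ne_of_mem_of_not_mem hRz.1 htR |>.symm
  have hI := hB.toIsIntersectingTriples
  by_cases hx : x ∈ E <;> by_cases hy : y ∈ E <;> by_cases hz : z ∈ E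
  · exact absurd (hI.mem_of_private_of_mem_of_mem hR hRz hE hx hy htE htx hty hT.ne_xy) htR
  · exact absurd (hI.mem_of_private_of_mem_of_mem hR hRz hE hx hy htE htx hty hT.ne_xy) htR
  · exact absurd (hI.mem_of_private_of_mem_of_mem hQ hQy hE hz hx htE htz htx hT.ne_xz.symm) htQ
  · exact h.exists_superset_of_private hB hT hE ⟨hx, hy, hz⟩ htE htU
  · exact absurd (hI.mem_of_private_of_mem_of_mem hP hPx hE hy hz htE hty htz hT.ne_yz) htP
  · obtain ⟨Q', R', P', h', hsub⟩ := h.rotate.exists_superset_of_private hB hT.rotate hE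
      ⟨hy, hz, hx⟩ htE (by rwa [hrot P Q R])
    exact ⟨P', Q', R', h'.rotate.rotate, by rwa [hrot P Q R, hrot P' Q' R'] at hsub⟩
  · obtain ⟨R', P', Q', h', hsub⟩ := h.rotate.rotate.exists_superset_of_private hB
      hT.rotate.rotate hE ⟨hz, hx, hy⟩ htE (by rwa [hrot Q R P, hrot P Q R])
    exact ⟨P', Q', R', h'.rotate,
      by rwa [hrot Q R P, hrot P Q R, hrot Q' R' P', hrot P' Q' R'] at hsub⟩
  · simpa [hx, hy, hz] using hT.cover E hE

lemma IsTauThree.exists_privateTriple_forall_subset (hB : IsTauThree B)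
    (hT : IsTriCover B x y z) :
    ∃ P Q R, IsPrivateTriple B x y z P Q R ∧ ∀ E ∈ B, E ⊆ P ∪ Q ∪ R := by
  -- otherwise spans could be enlarged forever, but they never exceed seven vertices
  by_contra! hnot
  have hgrow : ∀ n, ∃ P Q R, IsPrivateTriple B x y z P Q R ∧ n ≤ (P ∪ Q ∪ R).card := by
    intro n
    induction n with
    | zero =>
      obtain ⟨P, Q, R, h⟩ := hB.exists_privateTriple hT
      exact ⟨P, Q, R, h, Nat.zero_le _⟩
    | succ n ih =>
      obtain ⟨P, Q, R, h, hn⟩ := ih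
      obtain ⟨E, hE, hEU⟩ := hnot P Q R h
      obtain ⟨t, htE, htU⟩ := not_subset.1 hEU
      obtain ⟨P', Q', R', h', hsub⟩ := hB.exists_superset_of_not_mem hT h hE htE htU
      refine ⟨P', Q', R', h', ?_⟩
      have := card_le_card hsub
      rw [card_insert_of_notMem htU] at this
      omega
  obtain ⟨P, Q, R, h, h8⟩ := hgrow 8
  have := hB.card_union_le_seven h
  omega

lemma IsTauThree.card_biUnion_le_seven (hB : IsTauThree B) (hT : IsTriCover B x y z) :
    (B.biUnion id).card ≤ 7 := by
  obtain ⟨P, Q, R, h, hsub⟩ := hB.exists_privateTriple_forall_subset hT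
  exact (card_le_card (biUnion_subset.2 hsub)).trans (hB.card_union_le_seven h)

end

theorem stmt8 (B : Finset (Finset ℕ)) (h3 : ∀ E ∈ B, E.card = 3)
    (hint : FamIntersecting B) (hτ : tau B = 3) :
    B.card ≤ 10 ∧ (B.biUnion id).card ≤ 7 := by
  have hB : IsTauThree B := ⟨⟨h3, hint⟩, exists_avoid_of_two_lt_tau (by omega)⟩
  obtain ⟨x, y, z, hT⟩ := exists_isTriCover_of_tau_eq_three hτ
  exact ⟨hB.card_le_ten hT, hB.card_biUnion_le_seven hT⟩
end

section
/- If A, B ⊆ binom([n], r) are cross-intersecting families (possibly empty) with n ≥ 2r, then |A| + |B| ≤ binom(n, r). -/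
open Finset

/-! Disjointness is a regular relation on the `r`-subsets of `u`: each is disjoint from exactly
`C(#u - r, r)` of them, which is positive when `2 r ≤ #u`. Double counting the disjoint pairs
between a family `A` and its neighbourhood `N(A)` gives `|A| ≤ |N(A)|`, and cross-intersection
says precisely that `B` avoids `N(A)`. -/

section RegularRelation

variable {α : Type*} {R : α → α → Prop} [DecidableRel R]

theorem card_le_card_filter_exists_of_regular (hR : ∀ a b, R a b → R b a)
    {P A : Finset α} {d : ℕ} (hd : 0 < d) (hA : A ⊆ P)
    (hreg : ∀ a ∈ P, #{b ∈ P | R a b} = d) :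
    #A ≤ #{b ∈ P | ∃ a ∈ A, R a b} := by
  set N := {b ∈ P | ∃ a ∈ A, R a b}
  refine Nat.le_of_mul_le_mul_right (card_mul_le_card_mul R (m := d) (n := d) ?_ ?_) hd
  · intro a ha
    suffices h : N.bipartiteAbove R a = {b ∈ P | R a b} by rw [h, hreg a (hA ha)]
    ext b
    simp only [bipartiteAbove, N, mem_filter]
    exact ⟨fun h => ⟨h.1.1, h.2⟩, fun h => ⟨⟨h.1, a, ha, h.2⟩, h.2⟩⟩
  · intro b hb
    rw [← hreg b (mem_filter.1 hb).1]
    refine card_le_card fun a ha => ?_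
    obtain ⟨haA, hab⟩ := mem_filter.1 ha
    exact mem_filter.2 ⟨hA haA, hR a b hab⟩

end RegularRelation

section Kneser

variable {α : Type*} [DecidableEq α]

theorem filter_disjoint_powersetCard (S u : Finset α) (r : ℕ) :
    {T ∈ u.powersetCard r | Disjoint S T} = (u \ S).powersetCard r := by
  ext T
  simp only [mem_filter, mem_powersetCard, subset_sdiff]
  exact ⟨fun ⟨⟨hTu, hT⟩, hST⟩ => ⟨⟨hTu, hST.symm⟩, hT⟩,
    fun ⟨⟨hTu, hTS⟩, hT⟩ => ⟨⟨hTu, hT⟩, hTS.symm⟩⟩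

theorem card_filter_disjoint_powersetCard {S u : Finset α} {r : ℕ}
    (hS : S ∈ u.powersetCard r) :
    #{T ∈ u.powersetCard r | Disjoint S T} = (#u - r).choose r := by
  rw [mem_powersetCard] at hS
  rw [filter_disjoint_powersetCard, card_powersetCard, card_sdiff_of_subset hS.1, hS.2]

theorem card_add_card_le_choose_of_crossIntersecting {u : Finset α} {r : ℕ} (hr : 2 * r ≤ #u)
    {A B : Finset (Finset α)} (hA : A ⊆ u.powersetCard r) (hB : B ⊆ u.powersetCard r)
    (hAB : ∀ a ∈ A, ∀ b ∈ B, ¬Disjoint a b) :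
    #A + #B ≤ (#u).choose r := by
  set P := u.powersetCard r
  set N := {T ∈ P | ∃ S ∈ A, Disjoint S T}
  have hAN : #A ≤ #N :=
    card_le_card_filter_exists_of_regular (fun _ _ h => h.symm) (Nat.choose_pos (by omega)) hA
      fun S hS => card_filter_disjoint_powersetCard hS
  have hBN : B ⊆ P \ N := fun T hT =>
    mem_sdiff.2 ⟨hB hT, fun hN => by
      obtain ⟨S, hS, hST⟩ := (mem_filter.1 hN).2
      exact hAB S hS T hT hST⟩
  calc #A + #B ≤ #N + #(P \ N) := add_le_add hAN (card_le_card hBN)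
    _ = (#u).choose r := by
      rw [add_comm, card_sdiff_add_card_eq_card (filter_subset _ _), card_powersetCard]

end Kneser

theorem stmt9 (n r : ℕ) (hn : 2 * r ≤ n) (A B : Finset (Finset ℕ))
    (hA : A ⊆ (Finset.range n).powersetCard r)
    (hB : B ⊆ (Finset.range n).powersetCard r)
    (hcross : ∀ a ∈ A, ∀ b ∈ B, (a ∩ b).Nonempty) :
    A.card + B.card ≤ Nat.choose n r := by
  simpa using card_add_card_le_choose_of_crossIntersecting (u := range n) (by simpa using hn)
    hA hB fun a ha b hb => not_disjoint_iff_nonempty_inter.2 (hcross a ha b hb)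
end

section
/- Fix r ≥ 3 and 1 ≤ C < 3/2. For n sufficiently large, every intersecting family F ⊆ binom([n], r) satisfies d_C(F) ≤ (3 - 2C)·binom(n-3, r-2). -/
/-!
Let `x` be a vertex of maximum degree `Δ` and `D` the members of `F` missing `x`, so that
`|F| - C Δ = |D| - (C - 1) Δ`. Every count is by branching: a subfamily of sets through a fixed
`k`-set, all meeting some `r`-set disjoint from it, splits into `r` subfamilies through a
`(k+1)`-set, and sets through three fixed points number at most `C(n-3, r-3) = o(C(n-3, r-2))`.
If no two points cover `D`, branching three times bounds `|D|`. Otherwise, for each `u` of the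
cover, `D_u = F_u \ F_x` is no larger than `F_x \ F_u` (as `deg u ≤ Δ`), and the two
cross-intersect away from `x, u`; branching makes `D_u` small unless all of `D_u` and `F_x \ F_u`
pass through one more vertex `v`. Then `deg v ≤ Δ` gives `|D_u| ≤ |F_x ∩ F_u|`, hence
`2 |D_u| ≤ Δ`, while `|D_u| ≤ C(n-3, r-2)` as its sets contain `u, v` and miss `x`; this is the
extremal configuration when `D = D_u`, and otherwise some member misses both `x` and `u`, so
`F_x ∩ F_u`, and with it `D_u`, is small.
-/

open Finset

section Counting

variable {α : Type*} [DecidableEq α] {U : Finset α} {r : ℕ}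

theorem card_le_choose_of_forall_subset {G : Finset (Finset α)} (hG : G ⊆ U.powersetCard r)
    {S : Finset α} (hS : ∀ A ∈ G, S ⊆ A) : #G ≤ (#U - #S).choose (r - #S) := by
  rcases G.eq_empty_or_nonempty with rfl | ⟨A₀, hA₀⟩
  · simp
  have hSU : S ⊆ U := (hS A₀ hA₀).trans (mem_powersetCard.1 (hG hA₀)).1
  calc #G ≤ #((U \ S).powersetCard (r - #S)) := by
        refine card_le_card_of_injOn (· \ S) (fun A hA => ?_) (fun A hA A' hA' h => ?_)
        · obtain ⟨hAU, hAr⟩ := mem_powersetCard.1 (hG hA)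
          exact mem_powersetCard.2
            ⟨sdiff_subset_sdiff hAU le_rfl, by rw [card_sdiff_of_subset (hS A hA), hAr]⟩
        · rw [← sdiff_union_of_subset (hS A hA), ← sdiff_union_of_subset (hS A' hA')]
          exact congrArg (· ∪ S) h
    _ = (#U - #S).choose (r - #S) := by rw [card_powersetCard, card_sdiff_of_subset hSU]

theorem card_le_pow_mul_choose_of_blockers {w m k : ℕ} {G : Finset (Finset α)}
    (hG : G ⊆ U.powersetCard r) {S : Finset α} (hk : #S + k = m) (hS : ∀ A ∈ G, S ⊆ A)
    (hblock : ∀ T, S ⊆ T → #T < m →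
      ∃ B, #B ≤ w ∧ Disjoint B T ∧ ∀ A ∈ G, T ⊆ A → (A ∩ B).Nonempty) :
    #G ≤ w ^ k * (#U - m).choose (r - m) := by
  induction k generalizing G S with
  | zero => subst hk; simpa using card_le_choose_of_forall_subset hG hS
  | succ k ih =>
    obtain ⟨B, hBw, hBS, hB⟩ := hblock S le_rfl (by omega)
    have hcover : G ⊆ B.biUnion fun p => G.filter (p ∈ ·) := fun A hA => by
      obtain ⟨p, hp⟩ := hB A hA (hS A hA)
      exact mem_biUnion.2 ⟨p, (mem_inter.1 hp).2, mem_filter.2 ⟨hA, (mem_inter.1 hp).1⟩⟩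
    have hbranch : ∀ p ∈ B, #(G.filter (p ∈ ·)) ≤ w ^ k * (#U - m).choose (r - m) := by
      intro p hp
      have hpS : p ∉ S := disjoint_left.1 hBS hp
      refine ih ((filter_subset _ _).trans hG) (S := insert p S)
        (by rw [card_insert_of_notMem hpS]; omega)
        (fun A hA => insert_subset (mem_filter.1 hA).2 (hS A (mem_filter.1 hA).1))
        (fun T hT hTm => ?_)
      obtain ⟨B', hB'w, hB'T, hB'⟩ := hblock T ((subset_insert _ _).trans hT) hTm
      exact ⟨B', hB'w, hB'T, fun A hA => hB' A (mem_filter.1 hA).1⟩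
    calc #G ≤ #B * (w ^ k * (#U - m).choose (r - m)) :=
          (card_le_card hcover).trans (card_biUnion_le_card_mul _ _ _ hbranch)
      _ ≤ w ^ (k + 1) * (#U - m).choose (r - m) := by
          rw [pow_succ', mul_assoc]; gcongr

theorem card_le_mul_choose_of_pair {G : Finset (Finset α)} (hG : G ⊆ U.powersetCard r)
    {u v : α} (huv : u ≠ v) (huvG : ∀ A ∈ G, u ∈ A ∧ v ∈ A) {B : Finset α} (huB : u ∉ B)
    (hvB : v ∉ B) (hB : ∀ A ∈ G, (A ∩ B).Nonempty) :
    #G ≤ #B * (#U - 3).choose (r - 3) := by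
  have hcard : #{u, v} = 2 := card_pair huv
  simpa using card_le_pow_mul_choose_of_blockers (w := #B) (k := 1) hG (S := {u, v})
    (by omega) (fun A hA => insert_subset (huvG A hA).1 (singleton_subset_iff.2 (huvG A hA).2))
    fun T hT hT3 => by
      obtain rfl := eq_of_subset_of_card_le hT (by omega)
      exact ⟨B, le_rfl, by simp [huB, hvB], fun A hA _ => hB A hA⟩

theorem card_le_choose_of_pair_of_notMem {G : Finset (Finset α)} (hG : G ⊆ U.powersetCard r)
    {u v x : α} (huv : u ≠ v) (hx : x ∈ U) (hG' : ∀ A ∈ G, u ∈ A ∧ v ∈ A ∧ x ∉ A) :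
    #G ≤ (#U - 3).choose (r - 2) := by
  have hGx : G ⊆ (U.erase x).powersetCard r := fun A hA => by
    obtain ⟨hAU, hAr⟩ := mem_powersetCard.1 (hG hA)
    exact mem_powersetCard.2
      ⟨fun t ht => mem_erase.2 ⟨fun h => (hG' A hA).2.2 (h ▸ ht), hAU ht⟩, hAr⟩
  have := card_le_choose_of_forall_subset hGx (S := {u, v})
    fun A hA => insert_subset (hG' A hA).1 (singleton_subset_iff.2 (hG' A hA).2.1)
  rwa [card_erase_of_mem hx, card_pair huv, Nat.sub_sub] at this

end Counting

def degree (F : Finset (Finset ℕ)) (x : ℕ) : ℕ := #(F.filter fun E => x ∈ E)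

theorem degree_le_maxDeg (F : Finset (Finset ℕ)) (w : ℕ) : degree F w ≤ maxDeg F := by
  by_cases hw : w ∈ F.biUnion id
  · exact le_sup (f := degree F) hw
  · have : F.filter (fun E => w ∈ E) = ∅ :=
      filter_eq_empty_iff.2 fun E hE hwE => hw (mem_biUnion.2 ⟨E, hE, hwE⟩)
    simp [degree, this]

theorem exists_degree_eq_maxDeg (F : Finset (Finset ℕ)) :
    ∃ x, maxDeg F = degree F x ∧ ∀ w, degree F w ≤ degree F x := by
  rcases (F.biUnion id).eq_empty_or_nonempty with h | h
  · have h0 : maxDeg F = 0 := by simp [maxDeg, h]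
    have hdeg (w : ℕ) : degree F w = 0 := by simpa [h0] using degree_le_maxDeg F w
    exact ⟨0, by rw [h0, hdeg], fun w => by rw [hdeg, hdeg]⟩
  · obtain ⟨x, -, hx⟩ := exists_mem_eq_sup _ h (degree F)
    exact ⟨x, hx, fun w => hx ▸ degree_le_maxDeg F w⟩

theorem degree_eq_card_add_card (F : Finset (Finset ℕ)) (x u : ℕ) :
    degree F x = #(F.filter fun A => x ∈ A ∧ u ∈ A) + #(F.filter fun A => x ∈ A ∧ u ∉ A) := by
  rw [degree, ← card_filter_add_card_filter_not (fun A => u ∈ A), filter_filter, filter_filter]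

theorem card_filter_mem_notMem_le_of_degree_le {F : Finset (Finset ℕ)} {x u : ℕ}
    (h : degree F u ≤ degree F x) :
    #(F.filter fun A => u ∈ A ∧ x ∉ A) ≤ #(F.filter fun A => x ∈ A ∧ u ∉ A) := by
  rw [degree_eq_card_add_card F u x, degree_eq_card_add_card F x u] at h
  have hboth : F.filter (fun A => u ∈ A ∧ x ∈ A) = F.filter (fun A => x ∈ A ∧ u ∈ A) :=
    filter_congr fun _ _ => and_comm
  rw [hboth] at h
  omega

theorem card_filter_mem_notMem_le_of_forall_mem {F : Finset (Finset ℕ)} {x u v : ℕ}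
    (hvx : degree F v ≤ degree F x) (hD : ∀ A ∈ F.filter fun A => u ∈ A ∧ x ∉ A, v ∈ A)
    (hX : ∀ A ∈ F.filter fun A => x ∈ A ∧ u ∉ A, v ∈ A) :
    #(F.filter fun A => u ∈ A ∧ x ∉ A) ≤ #(F.filter fun A => x ∈ A ∧ u ∈ A) := by
  have hdisj : Disjoint (F.filter fun A => u ∈ A ∧ x ∉ A) (F.filter fun A => x ∈ A ∧ u ∉ A) :=
    disjoint_filter.2 fun _ _ h1 h2 => h1.2 h2.1
  have hsub : (F.filter fun A => u ∈ A ∧ x ∉ A) ∪ (F.filter fun A => x ∈ A ∧ u ∉ A) ⊆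
      F.filter fun E => v ∈ E :=
    union_subset (fun A hA => mem_filter.2 ⟨(mem_filter.1 hA).1, hD A hA⟩)
      (fun A hA => mem_filter.2 ⟨(mem_filter.1 hA).1, hX A hA⟩)
  have := (card_le_card hsub).trans hvx
  rw [card_union_of_disjoint hdisj, degree_eq_card_add_card F x u] at this
  omega

namespace FamIntersecting

variable {n r : ℕ} {F : Finset (Finset ℕ)}

theorem card_filter_mem_mem_le (hF : FamIntersecting F) (hFn : F ⊆ (range n).powersetCard r)
    {x u : ℕ} (hxu : x ≠ u) {B : Finset ℕ} (hB : B ∈ F) (hxB : x ∉ B) (huB : u ∉ B) :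
    #(F.filter fun A => x ∈ A ∧ u ∈ A) ≤ r * (n - 3).choose (r - 3) := by
  have := card_le_mul_choose_of_pair ((filter_subset _ F).trans hFn) hxu
    (fun A hA => (mem_filter.1 hA).2) hxB huB fun A hA => hF A (mem_filter.1 hA).1 B hB
  rwa [(mem_powersetCard.1 (hFn hB)).2, card_range] at this

theorem card_filter_mem_notMem_le_of_forall_exists (hF : FamIntersecting F)
    (hFn : F ⊆ (range n).powersetCard r) {x u : ℕ}
    (hD : (F.filter fun A => u ∈ A ∧ x ∉ A).Nonempty)
    (hv : ∀ v ≠ u, ∃ A ∈ F, u ∈ A ∧ x ∉ A ∧ v ∉ A) :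
    #(F.filter fun A => x ∈ A ∧ u ∉ A) ≤ r ^ 2 * (n - 3).choose (r - 3) := by
  obtain ⟨A₀, hA₀⟩ := hD
  rw [mem_filter] at hA₀
  have hnot (p : ℕ) : ∃ A ∈ F, x ∉ A ∧ u ∈ A ∧ p ∉ A.erase u := by
    by_cases hp : p = u
    · exact ⟨A₀, hA₀.1, hA₀.2.2, hA₀.2.1, hp ▸ notMem_erase p A₀⟩
    · obtain ⟨A, hA, huA, hxA, hpA⟩ := hv p hp
      exact ⟨A, hA, hxA, huA, fun h => hpA (mem_of_mem_erase h)⟩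
  -- For `T ⊆ {x, p}` the blocker is `A.erase u`, with `A` a member through `u` missing `x` and `p`.
  have := card_le_pow_mul_choose_of_blockers (w := r) (k := 2) (m := 3)
    (G := F.filter fun A => x ∈ A ∧ u ∉ A) ((filter_subset _ F).trans hFn) (S := {x}) (by simp)
    (fun A hA => singleton_subset_iff.2 (mem_filter.1 hA).2.1) fun T hxT hT3 => by
      have hxT := singleton_subset_iff.1 hxT
      obtain ⟨p, hp⟩ := card_le_one_iff_subset_singleton.1
        (show #(T.erase x) ≤ 1 by rw [card_erase_of_mem hxT]; omega)
      obtain ⟨A, hA, hxA, huA, hpA⟩ := hnot p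
      refine ⟨A.erase u, ?_, disjoint_right.2 fun t ht htA => ?_, fun A' hA' _ => ?_⟩
      · exact (card_erase_le).trans (mem_powersetCard.1 (hFn hA)).2.le
      · by_cases htx : t = x
        · exact hxA (htx ▸ mem_of_mem_erase htA)
        · exact hpA (mem_singleton.1 (hp (mem_erase.2 ⟨htx, ht⟩)) ▸ htA)
      · obtain ⟨t, ht⟩ := hF A' (mem_filter.1 hA').1 A hA
        rw [mem_inter] at ht
        have htu : t ≠ u := fun h => (mem_filter.1 hA').2.2 (h ▸ ht.1)
        exact ⟨t, mem_inter.2 ⟨ht.1, mem_erase.2 ⟨htu, ht.2⟩⟩⟩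
  simpa using this

theorem card_filter_mem_notMem_le (hF : FamIntersecting F) (hFn : F ⊆ (range n).powersetCard r)
    {x : ℕ} (hx : ∀ w, degree F w ≤ degree F x) (u : ℕ) :
    #(F.filter fun A => u ∈ A ∧ x ∉ A) ≤ r ^ 2 * (n - 3).choose (r - 3) ∨
      (#(F.filter fun A => u ∈ A ∧ x ∉ A) ≤ (n - 3).choose (r - 2) ∧
        #(F.filter fun A => u ∈ A ∧ x ∉ A) ≤ #(F.filter fun A => x ∈ A ∧ u ∈ A)) := by
  set D := F.filter fun A => u ∈ A ∧ x ∉ A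
  set X := F.filter fun A => x ∈ A ∧ u ∉ A
  rcases D.eq_empty_or_nonempty with hDe | hDne
  · left; simp [hDe]
  have hDX : #D ≤ #X := card_filter_mem_notMem_le_of_degree_le (hx u)
  by_cases hcommon : ∃ v ≠ u, ∀ A ∈ D, v ∈ A
  swap
  · push Not at hcommon
    refine .inl (hDX.trans (hF.card_filter_mem_notMem_le_of_forall_exists hFn hDne fun v hv => ?_))
    obtain ⟨A, hA, hvA⟩ := hcommon v hv
    exact ⟨A, (mem_filter.1 hA).1, (mem_filter.1 hA).2.1, (mem_filter.1 hA).2.2, hvA⟩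
  obtain ⟨v, hvu, hv⟩ := hcommon
  by_cases hXv : ∀ A ∈ X, v ∈ A
  · have hDxu := card_filter_mem_notMem_le_of_forall_mem (hx v) hv hXv
    obtain ⟨A₁, hA₁⟩ := card_pos.1 (hDne.card_pos.trans_le hDxu)
    have hxn : x ∈ range n :=
      (mem_powersetCard.1 (hFn (mem_filter.1 hA₁).1)).1 (mem_filter.1 hA₁).2.1
    have hN := card_le_choose_of_pair_of_notMem ((filter_subset _ F).trans hFn) hvu.symm hxn
      fun A hA => ⟨(mem_filter.1 hA).2.1, hv A hA, (mem_filter.1 hA).2.2⟩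
    rw [card_range] at hN
    exact .inr ⟨hN, hDxu⟩
  · push Not at hXv
    obtain ⟨A, hA, hvA⟩ := hXv
    have hAF := (mem_filter.1 hA).1
    have hpair := card_le_mul_choose_of_pair ((filter_subset _ F).trans hFn) hvu.symm
      (fun B hB => ⟨(mem_filter.1 hB).2.1, hv B hB⟩) (mem_filter.1 hA).2.2 hvA
      fun B hB => hF B (mem_filter.1 hB).1 A hAF
    rw [card_range, (mem_powersetCard.1 (hFn hAF)).2] at hpair
    exact .inl (hpair.trans (Nat.mul_le_mul_right _ (Nat.le_self_pow two_ne_zero r)))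

theorem card_filter_mem_notMem_le_of_avoid (hF : FamIntersecting F)
    (hFn : F ⊆ (range n).powersetCard r) {x : ℕ} (hx : ∀ w, degree F w ≤ degree F x) {u : ℕ}
    {B : Finset ℕ} (hB : B ∈ F) (hxB : x ∉ B) (huB : u ∉ B) :
    #(F.filter fun A => u ∈ A ∧ x ∉ A) ≤ r ^ 2 * (n - 3).choose (r - 3) := by
  rcases eq_or_ne x u with rfl | hxu
  · simp
  rcases hF.card_filter_mem_notMem_le hFn hx u with h | ⟨-, h⟩
  · exact h
  · exact h.trans <| (hF.card_filter_mem_mem_le hFn hxu hB hxB huB).trans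
      (Nat.mul_le_mul_right _ (Nat.le_self_pow two_ne_zero r))

theorem card_filter_notMem_le (hF : FamIntersecting F) (hFn : F ⊆ (range n).powersetCard r)
    (hr : 2 ≤ r) {x : ℕ} (hx : ∀ w, degree F w ≤ degree F x) :
    #(F.filter fun A => x ∉ A) ≤ r ^ 3 * (n - 3).choose (r - 3) ∨
      (#(F.filter fun A => x ∉ A) ≤ (n - 3).choose (r - 2) ∧
        2 * #(F.filter fun A => x ∉ A) ≤ degree F x) := by
  set D := F.filter fun A => x ∉ A
  by_cases hcover : ∃ T : Finset ℕ, #T < 3 ∧ ∀ B ∈ D, (B ∩ T).Nonempty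
  swap
  · push Not at hcover
    have hbound := card_le_pow_mul_choose_of_blockers (w := r) (k := 3) (m := 3) (G := D) (S := ∅)
      ((filter_subset _ F).trans hFn) (by simp) (fun _ _ => empty_subset _) fun T _ hT => by
        obtain ⟨B, hB, hBT⟩ := hcover T hT
        exact ⟨B, (mem_powersetCard.1 (hFn (mem_filter.1 hB).1)).2.le,
          disjoint_iff_inter_eq_empty.2 hBT,
          fun A hA _ => hF A (mem_filter.1 hA).1 B (mem_filter.1 hB).1⟩
    exact .inl (by simpa using hbound)
  obtain ⟨T, hT, hTD⟩ := hcover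
  by_cases hstar : ∃ y, ∀ B ∈ D, y ∈ B
  · obtain ⟨y, hy⟩ := hstar
    have hDy : D = F.filter fun A => y ∈ A ∧ x ∉ A :=
      filter_congr fun A hA => ⟨fun hxA => ⟨hy A (mem_filter.2 ⟨hA, hxA⟩), hxA⟩, And.right⟩
    rw [hDy]
    rcases hF.card_filter_mem_notMem_le hFn hx y with h | ⟨hN, hxy⟩
    · exact .inl (h.trans (Nat.mul_le_mul_right _ (Nat.pow_le_pow_right (by omega) (by norm_num))))
    · have hyx := card_filter_mem_notMem_le_of_degree_le (hx y)
      rw [degree_eq_card_add_card F x y]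
      exact .inr ⟨hN, by omega⟩
  · push Not at hstar
    refine .inl ?_
    calc #D ≤ #(T.biUnion fun y => F.filter fun A => y ∈ A ∧ x ∉ A) := card_le_card fun B hB => by
          obtain ⟨y, hy⟩ := hTD B hB
          exact mem_biUnion.2 ⟨y, (mem_inter.1 hy).2,
            mem_filter.2 ⟨(mem_filter.1 hB).1, (mem_inter.1 hy).1, (mem_filter.1 hB).2⟩⟩
      _ ≤ #T * (r ^ 2 * (n - 3).choose (r - 3)) := card_biUnion_le_card_mul _ _ _ fun y _ => by
          obtain ⟨B, hB, hyB⟩ := hstar y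
          exact hF.card_filter_mem_notMem_le_of_avoid hFn hx (mem_filter.1 hB).1
            (mem_filter.1 hB).2 hyB
      _ ≤ r * (r ^ 2 * (n - 3).choose (r - 3)) := Nat.mul_le_mul_right _ (by omega)
      _ = r ^ 3 * (n - 3).choose (r - 3) := by ring

end FamIntersecting

theorem eventually_pow_mul_choose_le {r : ℕ} (hr : 3 ≤ r) {ε : ℝ} (hε : 0 < ε) :
    ∀ᶠ n : ℕ in Filter.atTop,
      (r ^ 3 * (n - 3).choose (r - 3) : ℝ) ≤ ε * (n - 3).choose (r - 2) := by
  refine Filter.eventually_atTop.2 ⟨r + ⌈(r : ℝ) ^ 4 / ε⌉₊, fun n hn => ?_⟩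
  have hrn : r ≤ n := by omega
  have hratio : ((n - 3).choose (r - 2) : ℝ) * (r - 2) = (n - 3).choose (r - 3) * (n - r) := by
    have h := Nat.choose_succ_right_eq (n - 3) (r - 3)
    rw [show r - 3 + 1 = r - 2 by omega, show n - 3 - (r - 3) = n - r by omega] at h
    have h' := congrArg (Nat.cast (R := ℝ)) h
    push_cast [Nat.cast_sub (show 2 ≤ r by omega), Nat.cast_sub hrn] at h'
    exact h'
  have hlarge : (r : ℝ) ^ 4 ≤ ε * (n - r) := by
    have hceil := Nat.le_ceil ((r : ℝ) ^ 4 / ε)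
    have hn' : (r : ℝ) + ⌈(r : ℝ) ^ 4 / ε⌉₊ ≤ n := by exact_mod_cast hn
    rw [← div_le_iff₀' hε]
    linarith
  have hr3 : (3 : ℝ) ≤ r := by exact_mod_cast hr
  have hb : (0 : ℝ) ≤ (n - 3).choose (r - 3) := Nat.cast_nonneg _
  refine le_of_mul_le_mul_right ?_ (show (0 : ℝ) < r - 2 by linarith)
  calc (r ^ 3 * (n - 3).choose (r - 3) : ℝ) * (r - 2) ≤ r ^ 4 * (n - 3).choose (r - 3) := by
        nlinarith [pow_nonneg (Nat.cast_nonneg r : (0 : ℝ) ≤ r) 3]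
    _ ≤ ε * (n - r) * (n - 3).choose (r - 3) := mul_le_mul_of_nonneg_right hlarge hb
    _ = ε * (n - 3).choose (r - 2) * (r - 2) := by linear_combination (-ε) * hratio

theorem stmt11 (r : ℕ) (hr : 3 ≤ r) (C : ℝ) (hC1 : 1 ≤ C) (hC2 : C < 3 / 2) :
    ∃ N : ℕ, ∀ n ≥ N, ∀ F ⊆ (Finset.range n).powersetCard r, FamIntersecting F →
      (F.card : ℝ) - C * maxDeg F ≤ (3 - 2 * C) * Nat.choose (n - 3) (r - 2) := by
  obtain ⟨N, hN⟩ := Filter.eventually_atTop.1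
    (eventually_pow_mul_choose_le hr (ε := 3 - 2 * C) (by linarith))
  refine ⟨N, fun n hn F hFn hF => ?_⟩
  obtain ⟨x, hmax, hx⟩ := exists_degree_eq_maxDeg F
  have hsplit : #F = degree F x + #(F.filter fun A => x ∉ A) :=
    (card_filter_add_card_filter_not _).symm
  rw [hmax, hsplit]
  push_cast
  have hsmall := hN n hn
  have hdeg : (0 : ℝ) ≤ degree F x := Nat.cast_nonneg _
  rcases hF.card_filter_notMem_le hFn (by omega) hx with h | ⟨hD, htwo⟩
  · have h' : (#(F.filter fun A => x ∉ A) : ℝ) ≤ r ^ 3 * (n - 3).choose (r - 3) := by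
      exact_mod_cast h
    nlinarith
  · have hD' : (#(F.filter fun A => x ∉ A) : ℝ) ≤ (n - 3).choose (r - 2) := by exact_mod_cast hD
    have htwo' : 2 * (#(F.filter fun A => x ∉ A) : ℝ) ≤ degree F x := by exact_mod_cast htwo
    nlinarith
end

section
/- Fix r ≥ 3 and let q < r be a positive integer with C ≥ (q² + q + 1)/(q + 1). Then every intersecting family F ⊆ binom([n], r) satisfies d_C(F) ≤ r^{r+1}·binom(n - q - 1, r - q - 1) (in particular d_C(F) = O(n^{r-q-1})). -/
open Finset

/-!
If some `q` points meet every member of `F`, then `|F| ≤ q·Δ(F) ≤ C·Δ(F)` since `C ≥ q`.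
Otherwise every set `S` of at most `q` points misses some member `B`; as `F` is intersecting,
each `A ⊇ S` in `F` contains `S ∪ {x}` for some `x ∈ B \ S`. Branching `q + 1` times from `S = ∅`
bounds `|F|` by `r^(q+1)` times the number of `r`-sets containing a fixed `(q+1)`-set.
-/

lemma card_filter_mem_le_maxDeg (F : Finset (Finset ℕ)) (x : ℕ) :
    #{E ∈ F | x ∈ E} ≤ maxDeg F := by
  rcases Finset.eq_empty_or_nonempty {E ∈ F | x ∈ E} with h | ⟨A, hA⟩
  · simp [h]
  · rw [mem_filter] at hA
    exact le_sup (f := fun y => #{E ∈ F | y ∈ E}) (mem_biUnion.2 ⟨A, hA.1, hA.2⟩)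

lemma card_le_card_mul_maxDeg_of_transversal {F : Finset (Finset ℕ)} {T : Finset ℕ}
    (hT : ∀ A ∈ F, (A ∩ T).Nonempty) : #F ≤ #T * maxDeg F := by
  have hcover : F ⊆ T.biUnion fun x => {E ∈ F | x ∈ E} := by
    intro A hA
    obtain ⟨x, hx⟩ := hT A hA
    rw [mem_inter] at hx
    exact mem_biUnion.2 ⟨x, hx.2, mem_filter.2 ⟨hA, hx.1⟩⟩
  calc #F ≤ ∑ x ∈ T, #{E ∈ F | x ∈ E} := (card_le_card hcover).trans card_biUnion_le
    _ ≤ ∑ _x ∈ T, maxDeg F := sum_le_sum fun x _ => card_filter_mem_le_maxDeg F x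
    _ = #T * maxDeg F := by rw [sum_const, smul_eq_mul]

section Branching

variable {α : Type*} [DecidableEq α] {U : Finset α} {F : Finset (Finset α)} {r q : ℕ}

lemma card_filter_superset_le_choose (hF : F ⊆ U.powersetCard r) (S : Finset α) :
    #{A ∈ F | S ⊆ A} ≤ Nat.choose (#U - #S) (r - #S) := by
  rcases Finset.eq_empty_or_nonempty {A ∈ F | S ⊆ A} with h | ⟨A, hA⟩
  · simp [h]
  rw [mem_filter] at hA
  obtain ⟨hAU, hAr⟩ := mem_powersetCard.1 (hF hA.1)
  rw [← card_filter_powersetCard_subset S U r (hA.2.trans hAU) (hAr ▸ card_le_card hA.2)]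
  exact card_le_card (filter_subset_filter _ hF)

lemma card_filter_superset_le_of_forall_exists_disjoint (hF : F ⊆ U.powersetCard r)
    (hint : ∀ A ∈ F, ∀ B ∈ F, (A ∩ B).Nonempty)
    (hτ : ∀ T : Finset α, #T ≤ q → ∃ B ∈ F, Disjoint B T) :
    ∀ k (S : Finset α), #S + k = q + 1 →
      #{A ∈ F | S ⊆ A} ≤ r ^ k * Nat.choose (#U - q - 1) (r - q - 1) := by
  intro k
  induction k with
  | zero =>
    intro S hS
    simpa [Nat.sub_sub, ← hS] using card_filter_superset_le_choose hF S
  | succ k ih =>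
    intro S hS
    obtain ⟨B, hB, hBS⟩ := hτ S (by omega)
    have hBr : #B = r := (mem_powersetCard.1 (hF hB)).2
    have hcover : {A ∈ F | S ⊆ A} ⊆ B.biUnion fun x => {A ∈ F | insert x S ⊆ A} := by
      intro A hA
      rw [mem_filter] at hA
      obtain ⟨x, hx⟩ := hint A hA.1 B hB
      rw [mem_inter] at hx
      exact mem_biUnion.2 ⟨x, hx.2, mem_filter.2 ⟨hA.1, insert_subset hx.1 hA.2⟩⟩
    have hbranch : ∀ x ∈ B, #{A ∈ F | insert x S ⊆ A} ≤
        r ^ k * Nat.choose (#U - q - 1) (r - q - 1) := fun x hx =>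
      ih _ (by rw [card_insert_of_notMem (disjoint_left.1 hBS hx)]; omega)
    calc #{A ∈ F | S ⊆ A} ≤ ∑ x ∈ B, #{A ∈ F | insert x S ⊆ A} :=
          (card_le_card hcover).trans card_biUnion_le
      _ ≤ ∑ _x ∈ B, r ^ k * Nat.choose (#U - q - 1) (r - q - 1) := sum_le_sum hbranch
      _ = r ^ (k + 1) * Nat.choose (#U - q - 1) (r - q - 1) := by
          rw [sum_const, smul_eq_mul, hBr]; ring

lemma card_le_of_forall_exists_disjoint (hF : F ⊆ U.powersetCard r)
    (hint : ∀ A ∈ F, ∀ B ∈ F, (A ∩ B).Nonempty)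
    (hτ : ∀ T : Finset α, #T ≤ q → ∃ B ∈ F, Disjoint B T) :
    #F ≤ r ^ (q + 1) * Nat.choose (#U - q - 1) (r - q - 1) := by
  simpa using card_filter_superset_le_of_forall_exists_disjoint hF hint hτ (q + 1) ∅ (by simp)

end Branching

theorem stmt14_general (r q : ℕ) (hqr : q < r) (C : ℝ)
    (hC : ((q : ℝ) ^ 2 + q + 1) / (q + 1) ≤ C) :
    ∀ n : ℕ, ∀ F ⊆ (Finset.range n).powersetCard r, FamIntersecting F →
      (F.card : ℝ) - C * maxDeg F
        ≤ (r : ℝ) ^ (r + 1) * Nat.choose (n - q - 1) (r - q - 1) := by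
  intro n F hF hint
  have hqC : (q : ℝ) ≤ C :=
    le_trans ((le_div_iff₀ (by positivity)).2 (by nlinarith)) hC
  have hRHS : (0 : ℝ) ≤ (r : ℝ) ^ (r + 1) * Nat.choose (n - q - 1) (r - q - 1) := by positivity
  by_cases hT : ∃ T : Finset ℕ, #T ≤ q ∧ ∀ A ∈ F, (A ∩ T).Nonempty
  · obtain ⟨T, hTq, hTF⟩ := hT
    have hFΔ : (#F : ℝ) ≤ q * maxDeg F := by
      exact_mod_cast (card_le_card_mul_maxDeg_of_transversal hTF).trans
        (Nat.mul_le_mul_right _ hTq)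
    nlinarith [(Nat.cast_nonneg (maxDeg F) : (0 : ℝ) ≤ _)]
  · have hτ : ∀ T : Finset ℕ, #T ≤ q → ∃ B ∈ F, Disjoint B T := by
      push Not at hT
      simpa only [not_nonempty_iff_eq_empty, disjoint_iff_inter_eq_empty] using hT
    have hFr : (#F : ℝ) ≤ (r : ℝ) ^ (r + 1) * Nat.choose (n - q - 1) (r - q - 1) := by
      have hF' := card_le_of_forall_exists_disjoint hF hint hτ
      rw [card_range] at hF'
      exact_mod_cast hF'.trans (Nat.mul_le_mul_right _ (Nat.pow_le_pow_right (by omega) (by omega)))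
    nlinarith [mul_nonneg ((Nat.cast_nonneg q).trans hqC) (Nat.cast_nonneg (maxDeg F))]

theorem stmt14 (r q : ℕ) (hr : 3 ≤ r) (hq : 1 ≤ q) (hqr : q < r) (C : ℝ)
    (hC : ((q : ℝ) ^ 2 + q + 1) / (q + 1) ≤ C) :
    ∀ n : ℕ, ∀ F ⊆ (Finset.range n).powersetCard r, FamIntersecting F →
      (F.card : ℝ) - C * maxDeg F
        ≤ (r : ℝ) ^ (r + 1) * Nat.choose (n - q - 1) (r - q - 1) :=
  stmt14_general r q hqr C hC
end
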